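/- Define F⁺(v) := 1 - v·(4 + 2·log((1-v)/(4v)) + (1/2)·(log((1-v)/(4v)))²) - (1 - 2√(v(1-v))) for 0 < v < 1. Then F⁺(v) = -(3125/768)·(v - 1/5)³ + O((v - 1/5)⁴) as v → 1/5; in particular F⁺ vanishes to order exactly 3 at v = 1/5. -/
import Mathlib

lemma log_cubic3 (x : ℝ) (hx : |x| ≤ 1/2) :
    |Real.log (1+x) - (x - x^2/2 + x^3/3)| ≤ x^4 := by
  have hxn : ‖(x:ℂ)‖ = |x| := by simp
  have hz : ‖(x:ℂ)‖ < 1 := by rw [hxn]; linarith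
  have H := Complex.norm_log_sub_logTaylor_le 3 hz
  have hT : Complex.logTaylor 4 (x:ℂ) = (x:ℂ) - (x:ℂ)^2/2 + (x:ℂ)^3/3 := by
    simp [Complex.logTaylor, Finset.sum_range_succ]
    ring
  have h0 : (0:ℝ) < 1 + x := by
    rcases abs_le.mp hx with ⟨h, _⟩; linarith
  have hcast : Complex.log (1 + (x:ℂ)) - Complex.logTaylor 4 (x:ℂ)
      = ((Real.log (1+x) - (x - x^2/2 + x^3/3) : ℝ) : ℂ) := by
    rw [hT, show (1:ℂ) + (x:ℂ) = ((1+x : ℝ) : ℂ) by push_cast; ring,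
      ← Complex.ofReal_log h0.le]
    push_cast
    ring
  have habs : |Real.log (1+x) - (x - x^2/2 + x^3/3)|
      = ‖Complex.log (1 + (x:ℂ)) - Complex.logTaylor 4 (x:ℂ)‖ := by
    rw [hcast, Complex.norm_real, Real.norm_eq_abs]
  rw [habs]
  refine H.trans ?_
  rw [hxn]
  have h1 : (1 - |x|)⁻¹ ≤ 2 := by
    rw [inv_le_comm₀ (by linarith) (by norm_num)]; linarith
  have h2 : |x|^4 = x^4 := by
    rw [← abs_pow]; exact abs_of_nonneg (by positivity)
  nlinarith [pow_nonneg (abs_nonneg x) 4]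

lemma sqrt_cubic3 (u : ℝ) (hu : |u| ≤ 1/2) :
    |Real.sqrt (1+u) - (1 + u/2 - u^2/8 + u^3/16)| ≤ u^4 := by
  obtain ⟨hl, hr⟩ := abs_le.mp hu
  have h0 : (0:ℝ) ≤ 1 + u := by linarith
  set s := Real.sqrt (1+u) with hs
  have hs0 : 0 ≤ s := Real.sqrt_nonneg _
  have hs2 : s^2 = 1 + u := Real.sq_sqrt h0
  have hsge : (3:ℝ)/10 ≤ s := by nlinarith
  set P : ℝ := 1 + u/2 - u^2/8 + u^3/16 with hP
  clear_value s P
  have hPge : (7:ℝ)/10 ≤ P := by rw [hP]; nlinarith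
  have key : (s - P) * (s + P) = u^4 * (-(5/64) + u/64 - u^2/256) := by
    have : (s - P) * (s + P) = s^2 - P^2 := by ring
    rw [this, hs2, hP]; ring
  have hq : |(-(5/64) + u/64 - u^2/256 : ℝ)| ≤ 1 := by
    rw [abs_le]; constructor <;> nlinarith
  have h1 : |s - P| ≤ |s - P| * (s + P) := by
    have := mul_le_mul_of_nonneg_left (show (1:ℝ) ≤ s + P by linarith) (abs_nonneg (s - P))
    simpa using this
  refine h1.trans ?_
  have hmain : |(s - P) * (s + P)| ≤ u^4 := by
    rw [key, abs_mul, abs_of_nonneg (show (0:ℝ) ≤ u^4 by positivity)]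
    calc u^4 * |(-(5/64) + u/64 - u^2/256 : ℝ)| ≤ u^4 * 1 :=
          mul_le_mul_of_nonneg_left hq (by positivity)
      _ = u^4 := by ring
  calc |s - P| * (s + P) = |s - P| * |s + P| := by rw [abs_of_nonneg (by linarith : (0:ℝ) ≤ s + P)]
    _ = |(s - P) * (s + P)| := (abs_mul _ _).symm
    _ ≤ u^4 := hmain

noncomputable def Fplus (v : ℝ) : ℝ :=
  1 - v * (4 + 2 * Real.log ((1-v)/(4*v)) + (1/2) * (Real.log ((1-v)/(4*v)))^2)
    - (1 - 2 * Real.sqrt (v * (1-v)))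

set_option maxHeartbeats 4000000 in
theorem stmt_17 : ∃ C δ : ℝ, 0 < C ∧ 0 < δ ∧ ∀ v : ℝ, 0 < v → v < 1 →
    |v - 1/5| ≤ δ → |Fplus v + (3125/768) * (v - 1/5)^3| ≤ C * (v - 1/5)^4 := by
  refine ⟨1000000, 1/100, by norm_num, by norm_num, ?_⟩
  intro v hv0 hv1 hδ
  obtain ⟨t, rfl⟩ : ∃ t, v = 1/5 + t := ⟨v - 1/5, by ring⟩
  rw [show (1:ℝ)/5 + t - 1/5 = t by ring] at hδ ⊢
  obtain ⟨htl, htr⟩ := abs_le.mp hδ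
  have ht4 : (0:ℝ) ≤ t^4 := by positivity
  have ht2 : t^2 ≤ 1/10000 := by nlinarith
  have ht44 : t^4 ≤ 1/100000000 := by nlinarith
  have h1 : (0:ℝ) < 1 + (-(5/4)*t) := by nlinarith
  have h2 : (0:ℝ) < 1 + 5*t := by nlinarith
  have hA := log_cubic3 (-(5/4)*t) (by rw [abs_le]; constructor <;> nlinarith)
  have hB := log_cubic3 (5*t) (by rw [abs_le]; constructor <;> nlinarith)
  have hS := sqrt_cubic3 ((15/4)*t - (25/4)*t^2) (by rw [abs_le]; constructor <;> nlinarith)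
  have hlog : Real.log ((1-(1/5+t))/(4*(1/5+t))) =
      Real.log (1 + (-(5/4)*t)) - Real.log (1 + 5*t) := by
    rw [show (1-(1/5+t))/(4*(1/5+t)) = (1 + (-(5/4)*t))/(1+5*t) by
      rw [div_eq_div_iff (by nlinarith) h2.ne']; ring]
    exact Real.log_div h1.ne' h2.ne'
  have hsqrt : Real.sqrt ((1/5+t)*(1-(1/5+t))) =
      (2/5)*Real.sqrt (1+((15/4)*t-(25/4)*t^2)) := by
    rw [show (1/5+t)*(1-(1/5+t)) = (2/5)^2*(1+((15/4)*t-(25/4)*t^2)) by ring,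
        Real.sqrt_mul (by positivity), Real.sqrt_sq (by norm_num)]
  simp only [Fplus]
  rw [hlog, hsqrt]
  set A := Real.log (1 + (-(5/4)*t)) with hA'
  set B := Real.log (1 + 5*t) with hB'
  set s := Real.sqrt (1+((15/4)*t-(25/4)*t^2)) with hs'
  set eA := A - ((-(5/4)*t) - (-(5/4)*t)^2/2 + (-(5/4)*t)^3/3) with heA
  set eB := B - ((5*t) - (5*t)^2/2 + (5*t)^3/3) with heB
  set eS := s - (1 + ((15/4)*t - (25/4)*t^2)/2 - ((15/4)*t - (25/4)*t^2)^2/8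
      + ((15/4)*t - (25/4)*t^2)^3/16) with heS
  have heA4 : |eA| ≤ (625/256)*t^4 := hA.trans (le_of_eq (by ring))
  have heB4 : |eB| ≤ 625*t^4 := hB.trans (le_of_eq (by ring))
  have heS4 : |eS| ≤ 256*t^4 := by
    refine hS.trans ?_
    have h1 : |(15/4)*t - (25/4)*t^2| ≤ 4*|t| := by
      rcases abs_cases t with ⟨h, h'⟩ | ⟨h, h'⟩ <;> rw [abs_le] <;> constructor <;> nlinarith
    have h3 : |(15/4)*t - (25/4)*t^2|^4 ≤ (4*|t|)^4 := by
      gcongr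

    have h4 : |(15/4)*t - (25/4)*t^2|^4 = ((15/4)*t - (25/4)*t^2)^4 := by
      rw [← abs_pow]; exact abs_of_nonneg (by positivity)
    have h5 : (4*|t|)^4 = 256*t^4 := by
      have : |t|^4 = t^4 := by rw [← abs_pow]; exact abs_of_nonneg (by positivity)
      nlinarith [this]
    linarith [h3, h4.symm.le, h5.le]
  have he : |eA - eB| ≤ 628*t^4 := by
    calc |eA - eB| ≤ |eA| + |eB| := abs_sub _ _
      _ ≤ 628*t^4 := by linarith
  have key : 1 - (1/5+t) * (4 + 2 * (A - B) + (1/2) * (A - B)^2) - (1 - 2 * ((2/5)*s))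
        + 3125/768 * t^3
      = t^4*(151875/2048 - (325625/1536)*t + (22459375/73728)*t^2 - (66015625/73728)*t^3)
        + ((-2*(1/5+t))*(eA-eB)
           + (-(1/5+t)*((-25/4)*t + (375/32)*t^2 - (8125/192)*t^3))*(eA-eB)
           + (-(1/5+t)/2)*(eA-eB)^2
           + (4/5)*eS) := by
    rw [heA, heB, heS]; ring
  clear_value A B s eA eB eS
  rw [key]
  clear key hA hB hS hlog hsqrt heA heB heS hA' hB' hs' heA4 heB4 h1 h2 hδ hv0 hv1
  have habs4 : ∀ a b c d r : ℝ, |r + (a + b + c + d)| ≤ |r| + |a| + |b| + |c| + |d| := by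
    intro a b c d r
    calc |r + (a + b + c + d)| ≤ |r| + |a + b + c + d| := abs_add_le _ _
      _ ≤ |r| + (|a + b + c| + |d|) := by gcongr; exact abs_add_le _ _
      _ ≤ |r| + (|a + b| + |c| + |d|) := by gcongr; exact abs_add_le _ _
      _ ≤ |r| + (|a| + |b| + |c| + |d|) := by gcongr; exact abs_add_le _ _
      _ = |r| + |a| + |b| + |c| + |d| := by ring
  refine (habs4 _ _ _ _ _).trans ?_
  have hR : |t^4*(151875/2048 - (325625/1536)*t + (22459375/73728)*t^2
      - (66015625/73728)*t^3)| ≤ 1500*t^4 := by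
    rw [abs_mul, abs_of_nonneg ht4]
    have : |(151875/2048 - (325625/1536)*t + (22459375/73728)*t^2
        - (66015625/73728)*t^3 : ℝ)| ≤ 1500 := by
      rw [abs_le]; constructor <;> nlinarith [ht2, ht44]
    calc t^4 * |(151875/2048 - (325625/1536)*t + (22459375/73728)*t^2
        - (66015625/73728)*t^3 : ℝ)| ≤ t^4 * 1500 := mul_le_mul_of_nonneg_left this ht4
      _ = 1500*t^4 := by ring
  have hT1 : |(-2*(1/5+t))*(eA-eB)| ≤ 628*t^4 := by
    rw [abs_mul]
    have hc : |(-2*(1/5+t) : ℝ)| ≤ 1 := by rw [abs_le]; constructor <;> nlinarith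
    calc |(-2*(1/5+t) : ℝ)| * |eA - eB| ≤ 1 * (628*t^4) :=
        mul_le_mul hc he (abs_nonneg _) (by norm_num)
      _ = 628*t^4 := by ring
  have hT2 : |(-(1/5+t)*((-25/4)*t + (375/32)*t^2 - (8125/192)*t^3))*(eA-eB)| ≤ 628*t^4 := by
    rw [abs_mul]
    have hc : |(-(1/5+t)*((-25/4)*t + (375/32)*t^2 - (8125/192)*t^3) : ℝ)| ≤ 1 := by
      rw [abs_le]; constructor <;> nlinarith
    calc _ ≤ 1 * (628*t^4) := mul_le_mul hc he (abs_nonneg _) (by norm_num)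
      _ = 628*t^4 := by ring
  have hT3 : |(-(1/5+t)/2)*(eA-eB)^2| ≤ t^4 := by
    rw [abs_mul]
    have hc : |(-(1/5+t)/2 : ℝ)| ≤ 1 := by rw [abs_le]; constructor <;> nlinarith
    have hsq : |(eA-eB)^2| ≤ t^4 := by
      rw [abs_of_nonneg (sq_nonneg _)]
      have h8 : (eA-eB)^2 ≤ (628*t^4)*(628*t^4) := by
        calc (eA-eB)^2 = |eA-eB| * |eA-eB| := by rw [pow_two, ← abs_mul_abs_self]
          _ ≤ (628*t^4)*(628*t^4) := mul_le_mul he he (abs_nonneg _) (by positivity)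
      have h9 : t^4*t^4 ≤ (1/100000000)*t^4 := by
        nlinarith [mul_le_mul_of_nonneg_left ht44 ht4]
      have h10 : (628*t^4)*(628*t^4) = 394384*(t^4*t^4) := by ring
      linarith
    calc _ ≤ 1 * t^4 := mul_le_mul hc hsq (abs_nonneg _) (by norm_num)
      _ = t^4 := by ring
  have hT4 : |(4/5)*eS| ≤ 256*t^4 := by
    rw [abs_mul]
    calc |(4/5 : ℝ)| * |eS| ≤ 1 * (256*t^4) :=
        mul_le_mul (by rw [abs_le]; norm_num) heS4 (abs_nonneg _) (by norm_num)
      _ = 256*t^4 := by ring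
  linarith
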